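/- Let A ⊆ ℝ^d be a nonempty finite set with mean μ = (1/|A|)∑_{x∈A} x, and let S ⊆ ℝ^d be a nonempty finite set of centers with φ_A(S) ≥ 64·φ_A({μ}). Define B = {x ∈ A : φ_{{μ}}(S)/3 ≤ φ_{{x}}(S) ≤ 7·φ_{{μ}}(S)/3}. Then |B| ≥ (25/31)·|A|. -/

import Mathlib

/-!
Since `√φ_{{x}}(S)` is the distance from `x` to `S`, it is `1`-Lipschitz in `x`. Hence
`φ_{{x}}(S) ≤ 2‖x - μ‖² + 2 φ_{{μ}}(S)`; summing over `A` and using `φ_A(S) ≥ 64 φ_A({μ})` gives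
`31 φ_A({μ}) ≤ |A| φ_{{μ}}(S)`. On the other hand, the Lipschitz bound forces every point whose
cost leaves the band `[φ_{{μ}}(S)/3, 7 φ_{{μ}}(S)/3]` to satisfy `‖x - μ‖² > φ_{{μ}}(S)/6`, so by
Markov's inequality there are at most `6|A|/31` such points.
-/

open Finset

open scoped Classical

/-- `phiPt x S` is the squared distance from `x` to its nearest center in `S`,
i.e. `min_{s ∈ S} ‖x - s‖²`. -/
noncomputable def phiPt {d : ℕ} (x : EuclideanSpace ℝ (Fin d))
    (S : Finset (EuclideanSpace ℝ (Fin d))) : ℝ :=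
  sInf ((fun s => ‖x - s‖ ^ 2) '' (S : Set (EuclideanSpace ℝ (Fin d))))

/-- `phi A S = ∑_{x ∈ A} min_{s ∈ S} ‖x - s‖²`, the `k`-means cost of centers `S` on `A`. -/
noncomputable def phi {d : ℕ} (A S : Finset (EuclideanSpace ℝ (Fin d))) : ℝ :=
  ∑ x ∈ A, phiPt x S

/-- The mean (centroid) of a finite set of points. -/
noncomputable def mean {d : ℕ} (A : Finset (EuclideanSpace ℝ (Fin d))) :
    EuclideanSpace ℝ (Fin d) :=
  (A.card : ℝ)⁻¹ • ∑ x ∈ A, x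

/-- `rho X S z` is the cost of the centers `S` on `X` after discarding the `z`
points of `X` farthest from `S`: the minimum of `phi Y S` over `Y ⊆ X` with
`|Y| = |X| - z`. -/
noncomputable def rho {d : ℕ} (X S : Finset (EuclideanSpace ℝ (Fin d))) (z : ℕ) : ℝ :=
  sInf ((fun Y : Finset (EuclideanSpace ℝ (Fin d)) => phi Y S) ''
    {Y : Finset (EuclideanSpace ℝ (Fin d)) | Y ⊆ X ∧ Y.card = X.card - z})

section

variable {d : ℕ}

lemma phiPt_eq_infDist_sq (x : EuclideanSpace ℝ (Fin d))
    (S : Finset (EuclideanSpace ℝ (Fin d))) :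
    phiPt x S = Metric.infDist x (S : Set (EuclideanSpace ℝ (Fin d))) ^ 2 := by
  rcases S.eq_empty_or_nonempty with rfl | hS
  · simp [phiPt]
  obtain ⟨s, hs, hdist⟩ := S.finite_toSet.isCompact.exists_infDist_eq_dist (by simpa using hS) x
  refine le_antisymm ?_ ?_
  · exact csInf_le (S.finite_toSet.image _).bddBelow ⟨s, hs, by rw [hdist, dist_eq_norm]⟩
  · refine le_csInf ⟨_, s, hs, rfl⟩ ?_
    rintro _ ⟨t, ht, rfl⟩
    have hle := Metric.infDist_le_dist_of_mem (x := x) ht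
    rw [dist_eq_norm] at hle
    exact pow_le_pow_left₀ Metric.infDist_nonneg hle 2

lemma phiPt_nonneg (x : EuclideanSpace ℝ (Fin d)) (S : Finset (EuclideanSpace ℝ (Fin d))) :
    0 ≤ phiPt x S := by
  rw [phiPt_eq_infDist_sq]
  positivity

lemma phiPt_singleton (x y : EuclideanSpace ℝ (Fin d)) : phiPt x {y} = ‖x - y‖ ^ 2 := by
  simp [phiPt]

lemma sq_le_two_mul_sq_add_two_mul_sq_of_le_add {a b c : ℝ} (ha : 0 ≤ a) (hb : 0 ≤ b)
    (hc : 0 ≤ c) (h : a ≤ b + c) : a ^ 2 ≤ 2 * c ^ 2 + 2 * b ^ 2 := by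
  nlinarith [sq_nonneg (b - c)]

lemma sq_div_six_lt_sq_of_abs_sub_le {a b c : ℝ} (ha : 0 ≤ a) (hb : 0 ≤ b)
    (habc : |a - b| ≤ c) (h : ¬ (b ^ 2 / 3 ≤ a ^ 2 ∧ a ^ 2 ≤ 7 * b ^ 2 / 3)) :
    b ^ 2 / 6 < c ^ 2 := by
  obtain ⟨hab, hba⟩ := abs_sub_le_iff.mp habc
  rcases not_and_or.mp h with h | h <;> rw [not_le] at h
  -- `5b² - 12ab + 6a² = (b² - 3a²) + (2b - 3a)²`
  · have hc : (b - a) ^ 2 ≤ c ^ 2 := pow_le_pow_left₀ (by nlinarith) (by linarith) 2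
    nlinarith [sq_nonneg (2 * b - 3 * a)]
  -- `6a² - 12ab + 5b² = (3a² - 7b²) + 3(a - 2b)²`
  · have hc : (a - b) ^ 2 ≤ c ^ 2 := pow_le_pow_left₀ (by nlinarith) (by linarith) 2
    nlinarith [sq_nonneg (a - 2 * b)]


lemma phiPt_le_two_mul_sq_norm_sub_add (x y : EuclideanSpace ℝ (Fin d))
    (S : Finset (EuclideanSpace ℝ (Fin d))) :
    phiPt x S ≤ 2 * ‖x - y‖ ^ 2 + 2 * phiPt y S := by
  simp only [phiPt_eq_infDist_sq, ← dist_eq_norm]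
  exact sq_le_two_mul_sq_add_two_mul_sq_of_le_add Metric.infDist_nonneg Metric.infDist_nonneg
    dist_nonneg Metric.infDist_le_infDist_add_dist

lemma phiPt_div_six_lt_sq_norm_sub {x y : EuclideanSpace ℝ (Fin d)}
    {S : Finset (EuclideanSpace ℝ (Fin d))}
    (h : ¬ (phiPt y S / 3 ≤ phiPt x S ∧ phiPt x S ≤ 7 * phiPt y S / 3)) :
    phiPt y S / 6 < ‖x - y‖ ^ 2 := by
  simp only [phiPt_eq_infDist_sq, ← dist_eq_norm] at h ⊢
  exact sq_div_six_lt_sq_of_abs_sub_le Metric.infDist_nonneg Metric.infDist_nonneg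
    (by simpa [Real.dist_eq] using (Metric.lipschitz_infDist_pt _).dist_le_mul x y) h

lemma phi_le_two_mul_phi_singleton_add (A S : Finset (EuclideanSpace ℝ (Fin d)))
    (y : EuclideanSpace ℝ (Fin d)) :
    phi A S ≤ 2 * phi A {y} + 2 * #A * phiPt y S := by
  calc phi A S ≤ ∑ x ∈ A, (2 * ‖x - y‖ ^ 2 + 2 * phiPt y S) :=
        sum_le_sum fun x _ => phiPt_le_two_mul_sq_norm_sub_add x y S
    _ = 2 * phi A {y} + 2 * #A * phiPt y S := by
        simp only [phi, phiPt_singleton, sum_add_distrib, ← mul_sum, sum_const, nsmul_eq_mul]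
        ring

lemma card_filter_not_band_le {A S : Finset (EuclideanSpace ℝ (Fin d))}
    {y : EuclideanSpace ℝ (Fin d)} (hcost : 31 * phi A {y} ≤ #A * phiPt y S) :
    31 * (#(A.filter fun x => ¬ (phiPt y S / 3 ≤ phiPt x S ∧
        phiPt x S ≤ 7 * phiPt y S / 3)) : ℝ) ≤ 6 * #A := by
  set bad := A.filter fun x => ¬ (phiPt y S / 3 ≤ phiPt x S ∧ phiPt x S ≤ 7 * phiPt y S / 3)
  have hfar : ∀ x ∈ bad, phiPt y S / 6 < ‖x - y‖ ^ 2 :=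
    fun x hx => phiPt_div_six_lt_sq_norm_sub (mem_filter.mp hx).2
  have hbad : (#bad : ℝ) * (phiPt y S / 6) ≤ phi A {y} := by
    calc (#bad : ℝ) * (phiPt y S / 6) ≤ ∑ x ∈ bad, ‖x - y‖ ^ 2 := by
          simpa using card_nsmul_le_sum bad _ _ fun x hx => (hfar x hx).le
      _ ≤ phi A {y} := by
          simp only [phi, phiPt_singleton]
          exact sum_le_sum_of_subset_of_nonneg (filter_subset _ _) fun _ _ _ => by positivity
  rcases bad.eq_empty_or_nonempty with hempty | ⟨x, hx⟩
  · simp [hempty]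
  have hx_le : ‖x - y‖ ^ 2 ≤ phi A {y} := by
    simp only [phi, phiPt_singleton]
    exact single_le_sum (f := fun x => ‖x - y‖ ^ 2) (fun _ _ => by positivity)
      (filter_subset _ _ hx)
  have hm : 0 < phiPt y S := by
    by_contra hm
    have hm0 : phiPt y S = 0 := le_antisymm (not_lt.mp hm) (phiPt_nonneg y S)
    have hxy := hfar x hx
    rw [hm0] at hcost hxy
    linarith
  refine le_of_mul_le_mul_right ?_ hm
  linarith

end

theorem stmt4_general {d : ℕ} (A S : Finset (EuclideanSpace ℝ (Fin d)))
    (h : phi A S ≥ 64 * phi A {mean A}) :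
    ((A.filter (fun x => phiPt (mean A) S / 3 ≤ phiPt x S ∧
        phiPt x S ≤ 7 * phiPt (mean A) S / 3)).card : ℝ) ≥ (25 / 31) * A.card := by
  have hcost : 31 * phi A {mean A} ≤ #A * phiPt (mean A) S := by
    linarith [phi_le_two_mul_phi_singleton_add A S (mean A)]
  have hsplit := card_filter_add_card_filter_not (s := A) fun x =>
    phiPt (mean A) S / 3 ≤ phiPt x S ∧ phiPt x S ≤ 7 * phiPt (mean A) S / 3
  rify at hsplit
  linarith [card_filter_not_band_le hcost]

/-- second property of Lemma 2. If `φ_A(S) ≥ 64·φ_A({μ})`, then the set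
`B = {x ∈ A : φ_{{μ}}(S)/3 ≤ φ_{{x}}(S) ≤ 7·φ_{{μ}}(S)/3}` satisfies `|B| ≥ (25/31)·|A|`. -/
theorem stmt4 {d : ℕ} (A S : Finset (EuclideanSpace ℝ (Fin d)))
    (hA : A.Nonempty) (hS : S.Nonempty)
    (h : phi A S ≥ 64 * phi A {mean A}) :
    ((A.filter (fun x => phiPt (mean A) S / 3 ≤ phiPt x S ∧
        phiPt x S ≤ 7 * phiPt (mean A) S / 3)).card : ℝ) ≥ (25 / 31) * A.card :=
  stmt4_general A S h
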